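/- Cone types: let Σ be the selfsimilarity complex of a contracting selfsimilar group G with generating set S closed under restriction, and let H be the maximal length of horizontal geodesics. If v_1, v_2 are vertices and φ: Σ(B_hor(v_1,H)) → Σ(B_hor(v_2,H)) is a label-preserving graph isomorphism with φ(v_1)=v_2, then the map C_{v_1} → C_{v_2}, w v_1 ↦ w v_2 (w ∈ X*), is an isometry for the metric of Σ. -/

import Mathlib

/-- A selfsimilar action of a group `G` on the set of finite words over `X`:
`(uv)^g = u^g v^{g|_u}` where `g|_u` is the restriction of `g` to `u`. -/
structure SelfSimilarAction (G : Type*) [Group G] (X : Type*) where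
  act : List X → G → List X
  res : G → List X → G
  act_one : ∀ v, act v 1 = v
  act_mul : ∀ v g h, act v (g * h) = act (act v g) h
  act_length : ∀ v g, (act v g).length = v.length
  act_append : ∀ (v w : List X) (g : G), act (v ++ w) g = act v g ++ act w (res g v)
  res_mul : ∀ (g h : G) (v : List X), res (g * h) v = res g v * res h (act v g)
  res_one : ∀ v, res 1 v = 1

/-- The data of a selfsimilarity complex: a selfsimilar action together with a
symmetric generating set `S` closed under restriction. -/
structure SSComplex (G : Type*) [Group G] (X : Type*) extends SelfSimilarAction G X where
  S : Set G
  S_symm : ∀ s ∈ S, s⁻¹ ∈ S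
  S_res : ∀ s ∈ S, ∀ v : List X, res s v ∈ S

variable {G : Type*} [Group G] {X : Type*}

/-- The selfsimilarity complex: vertices are words, vertical edges join `v` and `xv`,
and horizontal edges join `u` and `u^s` for generators `s ∈ S`. -/
def SSComplex.graph (C : SSComplex G X) : SimpleGraph (List X) where
  Adj u v := u ≠ v ∧
    ((∃ s ∈ C.S, C.act u s = v) ∨ (∃ x : X, u = x :: v) ∨ (∃ x : X, v = x :: u))
  symm := by
    constructor
    rintro u v ⟨hne, h⟩
    refine ⟨fun h' => hne h'.symm, ?_⟩
    rcases h with ⟨s, hs, hact⟩ | ⟨x, hx⟩ | ⟨x, hx⟩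
    · refine Or.inl ⟨s⁻¹, C.S_symm s hs, ?_⟩
      rw [← hact, ← C.act_mul, mul_inv_cancel, C.act_one]
    · exact Or.inr (Or.inr ⟨x, hx⟩)
    · exact Or.inr (Or.inl ⟨x, hx⟩)
  loopless := ⟨fun u h => h.1 rfl⟩

/-- The horizontal subgraph of the selfsimilarity complex. -/
def SSComplex.hgraph (C : SSComplex G X) : SimpleGraph (List X) where
  Adj u v := u ≠ v ∧ ∃ s ∈ C.S, C.act u s = v
  symm := by
    constructor
    rintro u v ⟨hne, s, hs, hact⟩
    refine ⟨fun h' => hne h'.symm, s⁻¹, C.S_symm s hs, ?_⟩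
    rw [← hact, ← C.act_mul, mul_inv_cancel, C.act_one]
  loopless := ⟨fun u h => h.1 rfl⟩

/-- The horizontal ball `B_hor(v, r)`: vertices at the same level as `v` within
distance `r` of `v` in the selfsimilarity complex. -/
def SSComplex.bhor (C : SSComplex G X) (v : List X) (r : ℕ) : Set (List X) :=
  {w | w.length = v.length ∧ C.graph.dist v w ≤ r}

/-- The cone over a word `v`: the set of words ending in `v`. -/
def Cone {X : Type*} (v : List X) : Set (List X) := {u | ∃ w : List X, u = w ++ v}

/-- Every dart of the walk is a downward vertical step (deleting the first letter). -/
def WalkDown (C : SSComplex G X) {u v : List X} (p : C.graph.Walk u v) : Prop :=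
  ∀ d ∈ p.darts, ∃ x : X, d.toProd.1 = x :: d.toProd.2

/-- Every dart of the walk is an upward vertical step (prepending a letter). -/
def WalkUp (C : SSComplex G X) {u v : List X} (p : C.graph.Walk u v) : Prop :=
  ∀ d ∈ p.darts, ∃ x : X, d.toProd.2 = x :: d.toProd.1

/-- Every dart of the walk is a horizontal step, given by a generator in `S`. -/
def WalkHoriz (C : SSComplex G X) {u v : List X} (p : C.graph.Walk u v) : Prop :=
  ∀ d ∈ p.darts, ∃ s ∈ C.S, C.act d.toProd.1 s = d.toProd.2

/-- A walk is in normal form (with horizontal part of length at most `H`) if it is the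
concatenation of a descending vertical segment, a horizontal segment of length at most
`H`, and an ascending vertical segment. -/
def IsNormalForm (C : SSComplex G X) (H : ℕ) {u v : List X}
    (p : C.graph.Walk u v) : Prop :=
  ∃ (a b : List X) (p₁ : C.graph.Walk u a) (p₂ : C.graph.Walk a b) (p₃ : C.graph.Walk b v),
    p = p₁.append (p₂.append p₃) ∧ WalkDown C p₁ ∧ WalkHoriz C p₂ ∧ WalkUp C p₃ ∧
      p₂.length ≤ H

/-! A normal form geodesic from `w v₁` to `w' v₁` either descends below the level of `v₁`,
and is then at least as long as the path from `w v₂` to `w' v₂` through `v₂`, or it runs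
vertically to `d v₁`, horizontally (at most `H` steps) to `e v₁` and vertically to `w' v₁`.
Along the horizontal part the suffix `v₁` moves by restrictions of the generators and stays in
`B_hor(v₁, H)`, where `φ` intertwines the action; replacing it by its image under `φ` gives a
horizontal path of the same length from `d v₂` to `e v₂`. Hence
`d(w v₂, w' v₂) ≤ d(w v₁, w' v₁)`, and the reverse inequality is the same argument for `φ⁻¹`. -/

theorem List.exists_eq_append_of_append_eq_append {α : Type*} {c a w v : List α}
    (h : c ++ a = w ++ v) (hv : v.length ≤ a.length) : ∃ d, a = d ++ v ∧ w = c ++ d := by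
  obtain ⟨d, rfl⟩ : v <:+ a :=
    List.suffix_of_suffix_length_le (List.suffix_append w v) (h ▸ List.suffix_append c a) hv
  exact ⟨d, rfl, List.append_cancel_right (by simpa using h.symm)⟩

namespace SSComplex

variable (C : SSComplex G X)

def IsLabelPreserving (φ : List X → List X) (A : Set (List X)) : Prop :=
  ∀ u ∈ A, ∀ w ∈ A, ∀ s ∈ C.S, (C.act u s = w ↔ C.act (φ u) s = φ w)

def HasNormalFormGeodesics (H : ℕ) : Prop :=
  ∀ u v : List X, ∃ p : C.graph.Walk u v, p.length = C.graph.dist u v ∧ IsNormalForm C H p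

theorem isLabelPreserving_invFunOn {φ : List X → List X} {A B : Set (List X)}
    (hbij : Set.BijOn φ A B) (hφ : C.IsLabelPreserving φ A) :
    C.IsLabelPreserving (Function.invFunOn φ A) B := by
  intro u hu w hw s hs
  have hinv := hbij.invOn_invFunOn
  have hmaps := hbij.surjOn.mapsTo_invFunOn
  have := hφ _ (hmaps hu) _ (hmaps hw) s hs
  rwa [hinv.2 hu, hinv.2 hw, Iff.comm] at this

theorem graph_adj_cons (x : X) (u : List X) : C.graph.Adj (x :: u) u :=
  ⟨fun h => by simpa using congrArg List.length h, Or.inr (Or.inl ⟨x, rfl⟩)⟩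

theorem exists_walk_append_left (c u : List X) :
    ∃ p : C.graph.Walk (c ++ u) u, p.length = c.length := by
  induction c with
  | nil => exact ⟨.nil, rfl⟩
  | cons x c ih =>
    obtain ⟨p, hp⟩ := ih
    exact ⟨.cons (C.graph_adj_cons x (c ++ u)) p, by simp [hp]⟩

theorem graph_connected : C.graph.Connected := by
  have hnil (u : List X) : C.graph.Reachable u [] := by
    obtain ⟨p, -⟩ := C.exists_walk_append_left u []
    simpa using p.reachable
  exact ⟨fun u v => (hnil u).trans (hnil v).symm⟩

theorem dist_append_left_le (c u : List X) : C.graph.dist (c ++ u) u ≤ c.length := by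
  obtain ⟨p, hp⟩ := C.exists_walk_append_left c u
  exact hp ▸ SimpleGraph.dist_le p

theorem dist_append_le (w w' v : List X) :
    C.graph.dist (w ++ v) (w' ++ v) ≤ w.length + w'.length :=
  calc C.graph.dist (w ++ v) (w' ++ v)
      ≤ C.graph.dist (w ++ v) v + C.graph.dist v (w' ++ v) := C.graph_connected.dist_triangle
    _ ≤ w.length + w'.length := by
      rw [SimpleGraph.dist_comm (u := v)]
      exact add_le_add (C.dist_append_left_le w v) (C.dist_append_left_le w' v)

theorem dist_act_le_one {s : G} (hs : s ∈ C.S) (u : List X) :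
    C.graph.dist u (C.act u s) ≤ 1 := by
  by_cases h : u = C.act u s
  · simp [← h]
  · exact SimpleGraph.dist_le (SimpleGraph.Adj.toWalk (G := C.graph) ⟨h, Or.inl ⟨s, hs, rfl⟩⟩)

end SSComplex

section Walks

variable {C : SSComplex G X}

theorem WalkDown.exists_eq_append {u a : List X} {p : C.graph.Walk u a} (hp : WalkDown C p) :
    ∃ c, u = c ++ a ∧ p.length = c.length := by
  induction p with
  | nil => exact ⟨[], rfl, rfl⟩
  | cons h p ih =>
    simp only [WalkDown, SimpleGraph.Walk.darts_cons, List.mem_cons, forall_eq_or_imp] at hp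
    obtain ⟨⟨x, rfl⟩, hp⟩ := hp
    obtain ⟨c, rfl, hc⟩ := ih hp
    exact ⟨x :: c, rfl, by simp [hc]⟩

theorem WalkUp.exists_eq_append {b v : List X} {p : C.graph.Walk b v} (hp : WalkUp C p) :
    ∃ c, v = c ++ b ∧ p.length = c.length := by
  induction p with
  | nil => exact ⟨[], rfl, rfl⟩
  | cons h p ih =>
    simp only [WalkUp, SimpleGraph.Walk.darts_cons, List.mem_cons, forall_eq_or_imp] at hp
    obtain ⟨⟨x, rfl⟩, hp⟩ := hp
    obtain ⟨c, rfl, hc⟩ := ih hp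
    exact ⟨c ++ [x], by simp, by simp [hc]⟩

theorem WalkHoriz.length_eq {a b : List X} {p : C.graph.Walk a b} (hp : WalkHoriz C p) :
    b.length = a.length := by
  induction p with
  | nil => rfl
  | cons h p ih =>
    simp only [WalkHoriz, SimpleGraph.Walk.darts_cons, List.mem_cons, forall_eq_or_imp] at hp
    obtain ⟨⟨s, -, rfl⟩, hp⟩ := hp
    rw [ih hp, C.act_length]

theorem WalkHoriz.exists_dist_map_suffix_le {H : ℕ} {v : List X} {φ : List X → List X}
    (hφ : C.IsLabelPreserving φ (C.bhor v H)) {a b : List X} {p : C.graph.Walk a b}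
    (hp : WalkHoriz C p) (w t : List X) (ha : a = w ++ t) (ht : t.length = v.length)
    (hH : C.graph.dist v t + p.length ≤ H) :
    ∃ w' t', b = w' ++ t' ∧ t'.length = v.length ∧
      C.graph.dist (w ++ φ t) (w' ++ φ t') ≤ p.length := by
  induction p generalizing w t with
  | nil => exact ⟨w, t, ha, ht, by simp⟩
  | cons h p ih =>
    simp only [WalkHoriz, SimpleGraph.Walk.darts_cons, List.mem_cons, forall_eq_or_imp] at hp
    obtain ⟨⟨s, hs, hstep⟩, hp⟩ := hp
    subst ha
    simp only [SimpleGraph.Walk.length_cons] at hH ⊢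
    set t₂ := C.act t (C.res s w)
    have hres : C.res s w ∈ C.S := C.S_res s hs w
    have ht₂ : t₂.length = v.length := by rw [C.act_length, ht]
    have hdist : C.graph.dist v t₂ ≤ C.graph.dist v t + 1 :=
      C.graph_connected.dist_triangle.trans (add_le_add_right (C.dist_act_le_one hres t) _)
    obtain ⟨w', t', rfl, ht', hd⟩ :=
      ih hp (C.act w s) t₂ (by rw [← hstep, C.act_append]) ht₂ (by omega)
    have hφt : C.act (φ t) (C.res s w) = φ t₂ :=
      (hφ t ⟨ht, by omega⟩ t₂ ⟨ht₂, by omega⟩ _ hres).mp rfl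
    have hfirst : C.graph.dist (w ++ φ t) (C.act w s ++ φ t₂) ≤ 1 := by
      simpa [C.act_append, hφt] using C.dist_act_le_one hs (w ++ φ t)
    refine ⟨w', t', rfl, ht', ?_⟩
    have := C.graph_connected.dist_triangle (u := w ++ φ t) (v := C.act w s ++ φ t₂)
      (w := w' ++ φ t')
    omega

end Walks

namespace SSComplex

variable (C : SSComplex G X)

theorem dist_append_le_of_isLabelPreserving {H : ℕ} (hNF : C.HasNormalFormGeodesics H)
    {v₁ v₂ : List X} {φ : List X → List X} (hφ : C.IsLabelPreserving φ (C.bhor v₁ H))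
    (hφv : φ v₁ = v₂) (w w' : List X) :
    C.graph.dist (w ++ v₂) (w' ++ v₂) ≤ C.graph.dist (w ++ v₁) (w' ++ v₁) := by
  obtain ⟨p, hp, a, b, p₁, p₂, p₃, rfl, hdown, hhoriz, hup, hH⟩ := hNF (w ++ v₁) (w' ++ v₁)
  obtain ⟨c, hwa, hc⟩ := hdown.exists_eq_append
  obtain ⟨c', hwb, hc'⟩ := hup.exists_eq_append
  have hlen : C.graph.dist (w ++ v₁) (w' ++ v₁) = c.length + p₂.length + c'.length := by
    simp only [← hp, SimpleGraph.Walk.length_append, hc, hc']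
    omega
  rcases le_or_gt v₁.length a.length with ha | ha
  · obtain ⟨d, rfl, rfl⟩ := List.exists_eq_append_of_append_eq_append hwa.symm ha
    obtain ⟨e, t, rfl, ht, hde⟩ :=
      hhoriz.exists_dist_map_suffix_le hφ d v₁ rfl rfl (by simpa using hH)
    obtain ⟨rfl, rfl⟩ : w' = c' ++ e ∧ v₁ = t := List.append_inj' (by simpa using hwb) ht.symm
    rw [hφv] at hde
    calc C.graph.dist (c ++ d ++ v₂) (c' ++ e ++ v₂)
        ≤ C.graph.dist (c ++ d ++ v₂) (d ++ v₂) + C.graph.dist (d ++ v₂) (e ++ v₂) +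
          C.graph.dist (e ++ v₂) (c' ++ e ++ v₂) :=
          C.graph_connected.dist_triangle.trans (add_le_add_left C.graph_connected.dist_triangle _)
      _ ≤ c.length + p₂.length + c'.length := by
          rw [SimpleGraph.dist_comm (u := e ++ v₂), List.append_assoc, List.append_assoc]
          gcongr
          exacts [C.dist_append_left_le c _, C.dist_append_left_le c' _]
      _ = _ := hlen.symm
  · have hb := hhoriz.length_eq
    have hwl := congrArg List.length hwa
    have hwl' := congrArg List.length hwb
    simp only [List.length_append] at hwl hwl'
    have := C.dist_append_le w w' v₂
    omega

end SSComplex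

/-- Cone types: in the selfsimilarity complex of a contracting selfsimilar group with
generating set `S` closed under restriction, with every pair of vertices joined by a
normal form geodesic whose horizontal part has length at most `H`, if `φ` is a
label-preserving isomorphism between the induced subcomplexes on the horizontal balls
`B_hor(v₁, H)` and `B_hor(v₂, H)` with `φ(v₁) = v₂`, then the map
`C_{v₁} → C_{v₂}, w v₁ ↦ w v₂` is an isometry for the metric of `Σ`. -/
theorem stmt17 (C : SSComplex G X) (H : ℕ)
    (hNF : ∀ u v : List X,
      ∃ p : C.graph.Walk u v, p.length = C.graph.dist u v ∧ IsNormalForm C H p)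
    (v₁ v₂ : List X) (φ : List X → List X)
    (hbij : Set.BijOn φ (C.bhor v₁ H) (C.bhor v₂ H))
    (hlab : ∀ u ∈ C.bhor v₁ H, ∀ w ∈ C.bhor v₁ H, ∀ s ∈ C.S,
      (C.act u s = w ↔ C.act (φ u) s = φ w))
    (hφv : φ v₁ = v₂) :
    ∀ w w' : List X,
      C.graph.dist (w ++ v₁) (w' ++ v₁) = C.graph.dist (w ++ v₂) (w' ++ v₂) := by
  have hv₁ : v₁ ∈ C.bhor v₁ H := ⟨rfl, by simp⟩
  have hψv : Function.invFunOn φ (C.bhor v₁ H) v₂ = v₁ := hφv ▸ hbij.invOn_invFunOn.1 hv₁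
  intro w w'
  exact le_antisymm
    (C.dist_append_le_of_isLabelPreserving hNF (C.isLabelPreserving_invFunOn hbij hlab) hψv w w')
    (C.dist_append_le_of_isLabelPreserving hNF hlab hφv w w')
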